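/- arXiv:0910.2739 — 3 statements merged into one kernel-verified Lean document; each statement's English description precedes it below -/
import Mathlib

section
/- Let x : S¹ → M be a smooth loop in a Riemannian manifold and p > 1. Then for every δ > 0 and every smooth vector field ξ along x, ‖∇_t ξ‖_{L^p} ≤ κ_p (δ^{-1} ‖ξ‖_{L^p} + δ ‖∇_t ∇_t ξ‖_{L^p}), where κ_p = p/(p-1) for p ≤ 2 and κ_p = p for p ≥ 2. -/
open MeasureTheory Set
open scoped ENNReal

namespace SWD4

lemma lint_eq {p : ℝ} (hp : 0 ≤ p) {g : ℝ → ℝ} (hg : Continuous g) (hg0 : ∀ t, 0 ≤ g t)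
    (a b : ℝ) :
    ∫⁻ t in Ioc a b, ENNReal.ofReal (g t) ^ p = ENNReal.ofReal (∫ t in Ioc a b, g t ^ p) := by
  rw [lintegral_congr fun t => ENNReal.ofReal_rpow_of_nonneg (hg0 t) hp]
  exact (MeasureTheory.ofReal_integral_eq_lintegral_ofReal
      ((hg.rpow_const (fun t => Or.inr hp)).integrableOn_Ioc)
      (ae_of_all _ fun t => Real.rpow_nonneg (hg0 t) p)).symm

lemma nonnegI {p : ℝ} {g : ℝ → ℝ} (hg0 : ∀ t, 0 ≤ g t) :
    0 ≤ ∫ t in Ioc (0:ℝ) 1, g t ^ p :=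
  setIntegral_nonneg measurableSet_Ioc fun t _ => Real.rpow_nonneg (hg0 t) p

lemma transl {G : ℝ → ℝ} (hper : ∀ t, G (t + 1) = G t) (s : ℝ) :
    ∫ t in Ioc (0:ℝ) 1, G (t + s) = ∫ t in Ioc (0:ℝ) 1, G t := by
  rw [← intervalIntegral.integral_of_le zero_le_one,
    ← intervalIntegral.integral_of_le zero_le_one,
    intervalIntegral.integral_comp_add_right G s]
  have hper' : Function.Periodic G 1 := hper
  have := hper'.intervalIntegral_add_eq s 0
  simpa [add_comm] using this

lemma scal {p : ℝ} (hp : 0 < p) {h : ℝ → ℝ} (hh0 : ∀ t, 0 ≤ h t) {c : ℝ} (hc : 0 ≤ c) :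
    (∫ t in Ioc (0:ℝ) 1, (c * h t) ^ p) ^ (1/p)
      = c * (∫ t in Ioc (0:ℝ) 1, h t ^ p) ^ (1/p) := by
  have hI : 0 ≤ ∫ t in Ioc (0:ℝ) 1, h t ^ p :=
    setIntegral_nonneg measurableSet_Ioc fun t _ => Real.rpow_nonneg (hh0 t) p
  simp_rw [Real.mul_rpow hc (hh0 _)]
  rw [integral_const_mul, Real.mul_rpow (Real.rpow_nonneg hc p) hI, ← Real.rpow_mul hc,
    mul_one_div_cancel hp.ne', Real.rpow_one]

lemma mink3 {p : ℝ} (hp : 1 ≤ p) {u a b c : ℝ → ℝ}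
    (hu : Continuous u) (ha : Continuous a) (hb : Continuous b) (hc : Continuous c)
    (hu0 : ∀ t, 0 ≤ u t) (ha0 : ∀ t, 0 ≤ a t) (hb0 : ∀ t, 0 ≤ b t) (hc0 : ∀ t, 0 ≤ c t)
    (hle : ∀ t, u t ≤ a t + b t + c t) :
    (∫ t in Ioc (0:ℝ) 1, u t ^ p) ^ (1/p)
      ≤ (∫ t in Ioc (0:ℝ) 1, a t ^ p) ^ (1/p) + (∫ t in Ioc (0:ℝ) 1, b t ^ p) ^ (1/p)
        + (∫ t in Ioc (0:ℝ) 1, c t ^ p) ^ (1/p) := by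
  have hp0 : (0:ℝ) ≤ p := le_trans zero_le_one hp
  have h1p : (0:ℝ) ≤ 1/p := by positivity
  set μ := volume.restrict (Ioc (0:ℝ) 1) with hμ
  set A : ℝ → ℝ≥0∞ := fun t => ENNReal.ofReal (a t) with hA
  set B : ℝ → ℝ≥0∞ := fun t => ENNReal.ofReal (b t) with hB
  set C : ℝ → ℝ≥0∞ := fun t => ENNReal.ofReal (c t) with hC
  have mA : AEMeasurable A μ := (ENNReal.continuous_ofReal.comp ha).measurable.aemeasurable
  have mB : AEMeasurable B μ := (ENNReal.continuous_ofReal.comp hb).measurable.aemeasurable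
  have mC : AEMeasurable C μ := (ENNReal.continuous_ofReal.comp hc).measurable.aemeasurable
  have key : ENNReal.ofReal ((∫ t in Ioc (0:ℝ) 1, u t ^ p) ^ (1/p))
      ≤ ENNReal.ofReal ((∫ t in Ioc (0:ℝ) 1, a t ^ p) ^ (1/p)
          + (∫ t in Ioc (0:ℝ) 1, b t ^ p) ^ (1/p) + (∫ t in Ioc (0:ℝ) 1, c t ^ p) ^ (1/p)) := by
    rw [← ENNReal.ofReal_rpow_of_nonneg (nonnegI hu0) h1p, ← lint_eq hp0 hu hu0]
    have step1 : ∫⁻ t in Ioc (0:ℝ) 1, ENNReal.ofReal (u t) ^ p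
        ≤ ∫⁻ t in Ioc (0:ℝ) 1, ((A + B + C) t) ^ p := by
      refine lintegral_mono fun t => ?_
      refine ENNReal.rpow_le_rpow ?_ hp0
      calc ENNReal.ofReal (u t) ≤ ENNReal.ofReal (a t + b t + c t) :=
            ENNReal.ofReal_le_ofReal (hle t)
        _ = (A + B + C) t := by
            simp [hA, hB, hC, ENNReal.ofReal_add, ha0 t, hb0 t, hc0 t,
              add_nonneg (ha0 t) (hb0 t)]
    have step2 : (∫⁻ t in Ioc (0:ℝ) 1, ((A + B + C) t) ^ p) ^ (1/p)
        ≤ (∫⁻ t in Ioc (0:ℝ) 1, ((A + B) t) ^ p) ^ (1/p)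
          + (∫⁻ t in Ioc (0:ℝ) 1, (C t) ^ p) ^ (1/p) :=
      ENNReal.lintegral_Lp_add_le (mA.add mB) mC hp
    have step3 : (∫⁻ t in Ioc (0:ℝ) 1, ((A + B) t) ^ p) ^ (1/p)
        ≤ (∫⁻ t in Ioc (0:ℝ) 1, (A t) ^ p) ^ (1/p)
          + (∫⁻ t in Ioc (0:ℝ) 1, (B t) ^ p) ^ (1/p) :=
      ENNReal.lintegral_Lp_add_le mA mB hp
    calc (∫⁻ t in Ioc (0:ℝ) 1, ENNReal.ofReal (u t) ^ p) ^ (1/p)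
        ≤ (∫⁻ t in Ioc (0:ℝ) 1, ((A + B + C) t) ^ p) ^ (1/p) :=
          ENNReal.rpow_le_rpow step1 h1p
      _ ≤ (∫⁻ t in Ioc (0:ℝ) 1, (A t) ^ p) ^ (1/p)
          + (∫⁻ t in Ioc (0:ℝ) 1, (B t) ^ p) ^ (1/p)
          + (∫⁻ t in Ioc (0:ℝ) 1, (C t) ^ p) ^ (1/p) :=
          le_trans step2 (add_le_add_left step3 _)
      _ = ENNReal.ofReal ((∫ t in Ioc (0:ℝ) 1, a t ^ p) ^ (1/p)
          + (∫ t in Ioc (0:ℝ) 1, b t ^ p) ^ (1/p) + (∫ t in Ioc (0:ℝ) 1, c t ^ p) ^ (1/p)) := by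
          rw [hA, hB, hC]
          rw [lint_eq hp0 ha ha0, lint_eq hp0 hb hb0, lint_eq hp0 hc hc0,
            ENNReal.ofReal_rpow_of_nonneg (nonnegI ha0) h1p,
            ENNReal.ofReal_rpow_of_nonneg (nonnegI hb0) h1p,
            ENNReal.ofReal_rpow_of_nonneg (nonnegI hc0) h1p,
            ← ENNReal.ofReal_add (Real.rpow_nonneg (nonnegI ha0) _)
              (Real.rpow_nonneg (nonnegI hb0) _),
            ← ENNReal.ofReal_add (add_nonneg (Real.rpow_nonneg (nonnegI ha0) _)
              (Real.rpow_nonneg (nonnegI hb0) _)) (Real.rpow_nonneg (nonnegI hc0) _)]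
  have hrhs : 0 ≤ (∫ t in Ioc (0:ℝ) 1, a t ^ p) ^ (1/p)
      + (∫ t in Ioc (0:ℝ) 1, b t ^ p) ^ (1/p) + (∫ t in Ioc (0:ℝ) 1, c t ^ p) ^ (1/p) := by
    have := Real.rpow_nonneg (nonnegI (p := p) ha0) (1/p)
    have := Real.rpow_nonneg (nonnegI (p := p) hb0) (1/p)
    have := Real.rpow_nonneg (nonnegI (p := p) hc0) (1/p)
    linarith
  exact (ENNReal.ofReal_le_ofReal_iff hrhs).mp key

lemma holder_step {p : ℝ} (hp : 1 < p) {h : ℝ → ℝ} (hh : Continuous h) (hh0 : ∀ t, 0 ≤ h t)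
    (hper : ∀ t, h (t + 1) = h t) {δ : ℝ} (hδ : 0 < δ) :
    (∫ t in Ioc (0:ℝ) 1, (∫ s in (0:ℝ)..δ, (δ - s) * h (t + s)) ^ p) ^ (1/p)
      ≤ (δ^2/2) * (∫ t in Ioc (0:ℝ) 1, h t ^ p) ^ (1/p) := by
  have hp0 : (0:ℝ) < p := lt_trans one_pos hp
  have h1p : (0:ℝ) ≤ 1/p := by positivity
  set q : ℝ := p / (p - 1) with hqdef
  have hpq : p.HolderConjugate q := Real.HolderConjugate.conjExponent hp
  have hq0 : (0:ℝ) < q := hpq.symm.pos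
  have h1q : (0:ℝ) ≤ 1/q := by positivity
  -- the inner real function
  set Φ : ℝ → ℝ := fun t => ∫ s in (0:ℝ)..δ, (δ - s) * h (t + s) with hΦdef
  have hΦcont : Continuous Φ := by
    apply intervalIntegral.continuous_parametric_intervalIntegral_of_continuous'
    fun_prop
  have hΦ0 : ∀ t, 0 ≤ Φ t := by
    intro t
    exact intervalIntegral.integral_nonneg hδ.le
      (fun s hs => mul_nonneg (sub_nonneg.mpr hs.2) (hh0 _))
  set W : ℝ≥0∞ := ENNReal.ofReal (δ^2/2) with hWdef
  set K : ℝ≥0∞ := ENNReal.ofReal (∫ t in Ioc (0:ℝ) 1, h t ^ p) with hKdef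
  have hWne : W ≠ ⊤ := ENNReal.ofReal_ne_top
  have hKne : K ≠ ⊤ := ENNReal.ofReal_ne_top
  have hWcalc : ∫⁻ s in Ioc (0:ℝ) δ, ENNReal.ofReal (δ - s) = W := by
    have hint : IntegrableOn (fun s : ℝ => δ - s) (Ioc (0:ℝ) δ) volume :=
      (continuous_const.sub continuous_id).integrableOn_Ioc
    rw [← MeasureTheory.ofReal_integral_eq_lintegral_ofReal hint
        ((ae_restrict_iff' measurableSet_Ioc).mpr
          (ae_of_all _ fun s hs => sub_nonneg.mpr hs.2))]
    rw [hWdef]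
    congr 1
    rw [← intervalIntegral.integral_of_le hδ.le]
    rw [intervalIntegral.integral_sub intervalIntegrable_const
      intervalIntegral.intervalIntegrable_id]
    simp [integral_id]
    ring
  have hKs : ∀ s : ℝ, ∫⁻ t in Ioc (0:ℝ) 1, ENNReal.ofReal (h (t + s) ^ p) = K := by
    intro s
    have hcont : Continuous fun t => h (t + s) ^ p :=
      (hh.comp (continuous_id.add continuous_const)).rpow_const fun t => Or.inr hp0.le
    rw [← MeasureTheory.ofReal_integral_eq_lintegral_ofReal hcont.integrableOn_Ioc
        (ae_of_all _ fun t => Real.rpow_nonneg (hh0 _) p)]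
    rw [hKdef]
    congr 1
    exact transl (G := fun t => h t ^ p) (fun t => by show h (t + 1) ^ p = h t ^ p; rw [hper t]) s
  -- pointwise Hoelder in t
  have key : ∀ t, ENNReal.ofReal (Φ t) ^ p
      ≤ W ^ (p - 1) * ∫⁻ s in Ioc (0:ℝ) δ,
          ENNReal.ofReal (δ - s) * ENNReal.ofReal (h (t + s) ^ p) := by
    intro t
    have e1 : ENNReal.ofReal (Φ t)
        = ∫⁻ s in Ioc (0:ℝ) δ, ENNReal.ofReal (δ - s) * ENNReal.ofReal (h (t + s)) := by
      have hcont : Continuous fun s => (δ - s) * h (t + s) :=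
        (continuous_const.sub continuous_id).mul (hh.comp (continuous_const.add continuous_id))
      rw [hΦdef]
      simp only
      rw [intervalIntegral.integral_of_le hδ.le]
      rw [MeasureTheory.ofReal_integral_eq_lintegral_ofReal hcont.integrableOn_Ioc
          ((ae_restrict_iff' measurableSet_Ioc).mpr
            (ae_of_all _ fun s hs => mul_nonneg (sub_nonneg.mpr hs.2) (hh0 _)))]
      exact setLIntegral_congr_fun measurableSet_Ioc
        (fun s hs => ENNReal.ofReal_mul (sub_nonneg.mpr hs.2))
    have mW : AEMeasurable (fun s => ENNReal.ofReal (δ - s) ^ (1/q))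
        (volume.restrict (Ioc (0:ℝ) δ)) :=
      ((ENNReal.continuous_rpow_const.comp
        (ENNReal.continuous_ofReal.comp (continuous_const.sub continuous_id)))).measurable.aemeasurable
    have mG : AEMeasurable (fun s => ENNReal.ofReal (δ - s) ^ (1/p) * ENNReal.ofReal (h (t + s)))
        (volume.restrict (Ioc (0:ℝ) δ)) := by
      apply AEMeasurable.mul
      · exact ((ENNReal.continuous_rpow_const.comp
          (ENNReal.continuous_ofReal.comp (continuous_const.sub continuous_id)))).measurable.aemeasurable
      · exact (ENNReal.continuous_ofReal.comp
          (hh.comp (continuous_const.add continuous_id))).measurable.aemeasurable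
    have hold := ENNReal.lintegral_mul_le_Lp_mul_Lq (volume.restrict (Ioc (0:ℝ) δ))
      hpq.symm mW mG
    -- rewrite the three integrands in hold
    have eq1 : ∀ s : ℝ, ((fun s => ENNReal.ofReal (δ - s) ^ (1/q))
        * fun s => ENNReal.ofReal (δ - s) ^ (1/p) * ENNReal.ofReal (h (t + s))) s
        = ENNReal.ofReal (δ - s) * ENNReal.ofReal (h (t + s)) := by
      intro s
      simp only [Pi.mul_apply]
      rw [← mul_assoc, ← ENNReal.rpow_add_of_nonneg _ _ h1q h1p]
      rw [show 1/q + 1/p = 1 by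
        have := hpq.inv_add_inv_eq_one
        rw [one_div, one_div]
        linarith]
      rw [ENNReal.rpow_one]
    have eq2 : ∀ s : ℝ, ((fun s => ENNReal.ofReal (δ - s) ^ (1/q)) s) ^ q
        = ENNReal.ofReal (δ - s) := by
      intro s
      simp only
      rw [← ENNReal.rpow_mul, one_div_mul_cancel hq0.ne', ENNReal.rpow_one]
    have eq3 : ∀ s : ℝ,
        ((fun s => ENNReal.ofReal (δ - s) ^ (1/p) * ENNReal.ofReal (h (t + s))) s) ^ p
        = ENNReal.ofReal (δ - s) * ENNReal.ofReal (h (t + s) ^ p) := by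
      intro s
      simp only
      rw [ENNReal.mul_rpow_of_nonneg _ _ hp0.le, ← ENNReal.rpow_mul,
        one_div_mul_cancel hp0.ne', ENNReal.rpow_one,
        ENNReal.ofReal_rpow_of_nonneg (hh0 _) hp0.le]
    rw [lintegral_congr eq1, lintegral_congr eq2, lintegral_congr eq3, hWcalc] at hold
    -- raise to the p-th power
    calc ENNReal.ofReal (Φ t) ^ p
        ≤ (W ^ (1/q) * (∫⁻ s in Ioc (0:ℝ) δ,
            ENNReal.ofReal (δ - s) * ENNReal.ofReal (h (t + s) ^ p)) ^ (1/p)) ^ p := by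
          rw [e1]; exact ENNReal.rpow_le_rpow hold hp0.le
      _ = W ^ (p - 1) * ∫⁻ s in Ioc (0:ℝ) δ,
            ENNReal.ofReal (δ - s) * ENNReal.ofReal (h (t + s) ^ p) := by
          rw [ENNReal.mul_rpow_of_nonneg _ _ hp0.le, ← ENNReal.rpow_mul, ← ENNReal.rpow_mul,
            one_div_mul_cancel hp0.ne', ENNReal.rpow_one]
          congr 2
          rw [hqdef]
          field_simp
  -- integrate the pointwise bound and use Tonelli
  have hWp1 : W ^ (p - 1) ≠ ⊤ := ENNReal.rpow_ne_top_of_nonneg (by linarith) hWne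
  have meas_prod : AEMeasurable (Function.uncurry fun t s =>
      ENNReal.ofReal (δ - s) * ENNReal.ofReal (h (t + s) ^ p))
      ((volume.restrict (Ioc (0:ℝ) 1)).prod (volume.restrict (Ioc (0:ℝ) δ))) := by
    have : Measurable fun z : ℝ × ℝ =>
        ENNReal.ofReal (δ - z.2) * ENNReal.ofReal (h (z.1 + z.2) ^ p) := by
      refine Measurable.mul (f := fun z : ℝ × ℝ => ENNReal.ofReal (δ - z.2))
        (g := fun z : ℝ × ℝ => ENNReal.ofReal (h (z.1 + z.2) ^ p)) ?_ ?_
      · exact (ENNReal.continuous_ofReal.comp (continuous_const.sub continuous_snd)).measurable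
      · exact (ENNReal.continuous_ofReal.comp
          (((hh.comp (continuous_fst.add continuous_snd)).rpow_const
            fun z => Or.inr hp0.le))).measurable
    exact this.aemeasurable
  have main : ∫⁻ t in Ioc (0:ℝ) 1, ENNReal.ofReal (Φ t) ^ p ≤ W ^ p * K := by
    calc ∫⁻ t in Ioc (0:ℝ) 1, ENNReal.ofReal (Φ t) ^ p
        ≤ ∫⁻ t in Ioc (0:ℝ) 1, W ^ (p - 1) * ∫⁻ s in Ioc (0:ℝ) δ,
            ENNReal.ofReal (δ - s) * ENNReal.ofReal (h (t + s) ^ p) :=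
          lintegral_mono fun t => key t
      _ = W ^ (p - 1) * ∫⁻ t in Ioc (0:ℝ) 1, ∫⁻ s in Ioc (0:ℝ) δ,
            ENNReal.ofReal (δ - s) * ENNReal.ofReal (h (t + s) ^ p) :=
          lintegral_const_mul' _ _ hWp1
      _ = W ^ (p - 1) * ∫⁻ s in Ioc (0:ℝ) δ, ∫⁻ t in Ioc (0:ℝ) 1,
            ENNReal.ofReal (δ - s) * ENNReal.ofReal (h (t + s) ^ p) := by
          rw [lintegral_lintegral_swap meas_prod]
      _ = W ^ (p - 1) * ∫⁻ s in Ioc (0:ℝ) δ, ENNReal.ofReal (δ - s) * K := by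
          congr 1
          refine lintegral_congr fun s => ?_
          rw [lintegral_const_mul' _ _ ENNReal.ofReal_ne_top, hKs s]
      _ = W ^ (p - 1) * (W * K) := by
          congr 1
          rw [lintegral_mul_const' _ _ hKne, hWcalc]
      _ = W ^ p * K := by
          rw [← mul_assoc]
          congr 1
          nth_rewrite 2 [← ENNReal.rpow_one W]
          rw [← ENNReal.rpow_add_of_nonneg _ _ (by linarith) zero_le_one, sub_add_cancel]
  -- back to real numbers
  have hIh : 0 ≤ ∫ t in Ioc (0:ℝ) 1, h t ^ p := nonnegI hh0
  have final : ENNReal.ofReal ((∫ t in Ioc (0:ℝ) 1, Φ t ^ p) ^ (1/p))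
      ≤ ENNReal.ofReal ((δ^2/2) * (∫ t in Ioc (0:ℝ) 1, h t ^ p) ^ (1/p)) := by
    rw [← ENNReal.ofReal_rpow_of_nonneg (nonnegI hΦ0) h1p, ← lint_eq hp0.le hΦcont hΦ0]
    calc (∫⁻ t in Ioc (0:ℝ) 1, ENNReal.ofReal (Φ t) ^ p) ^ (1/p)
        ≤ (W ^ p * K) ^ (1/p) := ENNReal.rpow_le_rpow main h1p
      _ = W * K ^ (1/p) := by
          rw [ENNReal.mul_rpow_of_nonneg _ _ h1p, ← ENNReal.rpow_mul,
            mul_one_div_cancel hp0.ne', ENNReal.rpow_one]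
      _ = ENNReal.ofReal ((δ^2/2) * (∫ t in Ioc (0:ℝ) 1, h t ^ p) ^ (1/p)) := by
          rw [hWdef, hKdef, ENNReal.ofReal_rpow_of_nonneg hIh h1p,
            ← ENNReal.ofReal_mul (by positivity)]
  exact (ENNReal.ofReal_le_ofReal_iff
    (mul_nonneg (by positivity) (Real.rpow_nonneg hIh _))).mp final

end SWD4

/-- Lemma D.4 of Salamon–Weber (flat case `M = ℝᵏ`): for a smooth 1-periodic loop
`f : S¹ → ℝᵏ` and `p > 1`, `‖f'‖_p ≤ κ_p (δ⁻¹ ‖f‖_p + δ ‖f''‖_p)`, where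
`κ_p = p/(p-1)` for `p ≤ 2` and `κ_p = p` for `p ≥ 2`. -/
theorem deriv_Lp_interpolation (k : ℕ) (p : ℝ) (hp : 1 < p)
    (f : ℝ → EuclideanSpace ℝ (Fin k)) (hf : ContDiff ℝ (⊤ : ℕ∞) f)
    (hper : ∀ t, f (t + 1) = f t) (δ : ℝ) (hδ : 0 < δ) :
    (∫ t in Ioc (0 : ℝ) 1, ‖deriv f t‖ ^ p) ^ (1 / p)
      ≤ (if p ≤ 2 then p / (p - 1) else p) *
        (δ⁻¹ * (∫ t in Ioc (0 : ℝ) 1, ‖f t‖ ^ p) ^ (1 / p)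
          + δ * (∫ t in Ioc (0 : ℝ) 1, ‖deriv (deriv f) t‖ ^ p) ^ (1 / p)) := by
  have hp0 : (0:ℝ) < p := lt_trans one_pos hp
  have hf' : ContDiff ℝ (⊤:ℕ∞) f := hf.of_le (by simp)
  have hdiff : Differentiable ℝ f := (contDiff_infty_iff_deriv.mp hf').1
  have hf1 : ContDiff ℝ (⊤:ℕ∞) (deriv f) := (contDiff_infty_iff_deriv.mp hf').2
  have hdiff1 : Differentiable ℝ (deriv f) := (contDiff_infty_iff_deriv.mp hf1).1
  have hf2c : Continuous (deriv (deriv f)) := ((contDiff_infty_iff_deriv.mp hf1).2).continuous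
  have hfc : Continuous f := hf'.continuous
  have hf1c : Continuous (deriv f) := hf1.continuous
  -- periodicity of derivatives
  have hP1 : ∀ t, deriv f (t + 1) = deriv f t := by
    intro t
    have h1 : deriv (fun x => f (x + 1)) t = deriv f (t + 1) := deriv_comp_add_const _ _ _
    have h2 : (fun x => f (x + 1)) = f := funext fun x => hper x
    rw [← h1, h2]
  have hP2 : ∀ t, deriv (deriv f) (t + 1) = deriv (deriv f) t := by
    intro t
    have h1 : deriv (fun x => deriv f (x + 1)) t = deriv (deriv f) (t + 1) := deriv_comp_add_const _ _ _
    have h2 : (fun x => deriv f (x + 1)) = deriv f := funext fun x => hP1 x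
    rw [← h1, h2]
  -- the fundamental identity
  have hId : ∀ t, (∫ s in (0:ℝ)..δ, (δ - s) • deriv (deriv f) (t + s))
      = f (t + δ) - f t - δ • deriv f t := by
    intro t
    have hderiv : ∀ s ∈ uIcc (0:ℝ) δ,
        HasDerivAt (fun s => (δ - s) • deriv f (t + s) + f (t + s))
          ((δ - s) • deriv (deriv f) (t + s)) s := by
      intro s _
      have h1 : HasDerivAt (fun s => deriv f (t + s)) (deriv (deriv f) (t + s)) s := by
        have := ((hdiff1 (t + s)).hasDerivAt).scomp s
          (((hasDerivAt_id s).const_add t))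
        simpa [Function.comp_def] using this
      have h2 : HasDerivAt (fun s => f (t + s)) (deriv f (t + s)) s := by
        have := ((hdiff (t + s)).hasDerivAt).scomp s
          (((hasDerivAt_id s).const_add t))
        simpa [Function.comp_def] using this
      have h3 : HasDerivAt (fun s : ℝ => δ - s) (-1) s := by
        simpa using (hasDerivAt_id s).const_sub δ
      have h4 := (h3.smul h1).add h2
      exact h4.congr_deriv (by simp)
    have hint : IntervalIntegrable (fun s => (δ - s) • deriv (deriv f) (t + s)) volume 0 δ :=
      (((continuous_const.sub continuous_id).smul
        (hf2c.comp (continuous_const.add continuous_id)))).intervalIntegrable 0 δ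
    rw [intervalIntegral.integral_eq_sub_of_hasDerivAt hderiv hint]
    simp
    abel
  -- pointwise bound
  set Φ : ℝ → ℝ := fun t => ∫ s in (0:ℝ)..δ, (δ - s) * ‖deriv (deriv f) (t + s)‖ with hΦdef
  have hΦcont : Continuous Φ := by
    apply intervalIntegral.continuous_parametric_intervalIntegral_of_continuous'
    fun_prop
  have hΦ0 : ∀ t, 0 ≤ Φ t := fun t =>
    intervalIntegral.integral_nonneg hδ.le
      (fun s hs => mul_nonneg (sub_nonneg.mpr hs.2) (norm_nonneg _))
  have hpt : ∀ t, ‖deriv f t‖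
      ≤ δ⁻¹ * ‖f (t + δ)‖ + δ⁻¹ * ‖f t‖ + δ⁻¹ * Φ t := by
    intro t
    have h2 : ‖deriv f t‖ = δ⁻¹ * ‖δ • deriv f t‖ := by
      rw [norm_smul, Real.norm_eq_abs, abs_of_pos hδ, ← mul_assoc,
        inv_mul_cancel₀ hδ.ne', one_mul]
    have h1 : δ • deriv f t
        = f (t + δ) - f t - ∫ s in (0:ℝ)..δ, (δ - s) • deriv (deriv f) (t + s) := by
      rw [hId t]; abel
    have h4 : ‖∫ s in (0:ℝ)..δ, (δ - s) • deriv (deriv f) (t + s)‖ ≤ Φ t := by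
      calc ‖∫ s in (0:ℝ)..δ, (δ - s) • deriv (deriv f) (t + s)‖
          ≤ ∫ s in (0:ℝ)..δ, ‖(δ - s) • deriv (deriv f) (t + s)‖ :=
            intervalIntegral.norm_integral_le_integral_norm hδ.le
        _ = Φ t := by
            rw [hΦdef]
            refine intervalIntegral.integral_congr fun s hs => ?_
            rw [uIcc_of_le hδ.le] at hs
            rw [norm_smul, Real.norm_eq_abs, abs_of_nonneg (sub_nonneg.mpr hs.2)]
    have h3 : ‖f (t + δ) - f t - ∫ s in (0:ℝ)..δ, (δ - s) • deriv (deriv f) (t + s)‖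
        ≤ ‖f (t + δ)‖ + ‖f t‖ + Φ t := by
      calc ‖f (t + δ) - f t - ∫ s in (0:ℝ)..δ, (δ - s) • deriv (deriv f) (t + s)‖
          ≤ ‖f (t + δ) - f t‖ + ‖∫ s in (0:ℝ)..δ, (δ - s) • deriv (deriv f) (t + s)‖ :=
            norm_sub_le _ _
        _ ≤ ‖f (t + δ)‖ + ‖f t‖ + Φ t :=
            add_le_add (norm_sub_le _ _) h4
    rw [h2, h1]
    calc δ⁻¹ * ‖f (t + δ) - f t - ∫ s in (0:ℝ)..δ, (δ - s) • deriv (deriv f) (t + s)‖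
        ≤ δ⁻¹ * (‖f (t + δ)‖ + ‖f t‖ + Φ t) :=
          mul_le_mul_of_nonneg_left h3 (by positivity)
      _ = δ⁻¹ * ‖f (t + δ)‖ + δ⁻¹ * ‖f t‖ + δ⁻¹ * Φ t := by ring

  -- assemble
  set A : ℝ := (∫ t in Ioc (0:ℝ) 1, ‖f t‖ ^ p) ^ (1/p) with hA
  set B : ℝ := (∫ t in Ioc (0:ℝ) 1, ‖deriv (deriv f) t‖ ^ p) ^ (1/p) with hB
  have hA0 : 0 ≤ A := Real.rpow_nonneg (SWD4.nonnegI fun t => norm_nonneg _) _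
  have hB0 : 0 ≤ B := Real.rpow_nonneg (SWD4.nonnegI fun t => norm_nonneg _) _
  have hδinv : (0:ℝ) ≤ δ⁻¹ := (inv_pos.mpr hδ).le
  have step := SWD4.mink3 (u := fun t => ‖deriv f t‖) (a := fun t => δ⁻¹ * ‖f (t + δ)‖)
    (b := fun t => δ⁻¹ * ‖f t‖) (c := fun t => δ⁻¹ * Φ t) hp.le (hf1c.norm)
    (continuous_const.mul ((hfc.comp (continuous_id.add continuous_const)).norm))
    (continuous_const.mul hfc.norm) (continuous_const.mul hΦcont)
    (fun t => norm_nonneg _)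
    (fun t => mul_nonneg hδinv (norm_nonneg _))
    (fun t => mul_nonneg hδinv (norm_nonneg _))
    (fun t => mul_nonneg hδinv (hΦ0 t)) hpt
  have ea : (∫ t in Ioc (0:ℝ) 1, (δ⁻¹ * ‖f (t + δ)‖) ^ p) ^ (1/p) = δ⁻¹ * A := by
    rw [SWD4.scal hp0 (fun t => norm_nonneg _) hδinv]
    congr 1
    rw [hA]
    congr 1
    exact SWD4.transl (G := fun t => ‖f t‖ ^ p) (fun t => by simp [hper t]) δ
  have eb : (∫ t in Ioc (0:ℝ) 1, (δ⁻¹ * ‖f t‖) ^ p) ^ (1/p) = δ⁻¹ * A := by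
    rw [SWD4.scal hp0 (fun t => norm_nonneg _) hδinv]
  have ec : (∫ t in Ioc (0:ℝ) 1, (δ⁻¹ * Φ t) ^ p) ^ (1/p) ≤ δ⁻¹ * ((δ^2/2) * B) := by
    rw [SWD4.scal hp0 hΦ0 hδinv]
    refine mul_le_mul_of_nonneg_left ?_ hδinv
    exact SWD4.holder_step hp hf2c.norm (fun t => norm_nonneg _)
      (fun t => by simp [hP2 t]) hδ
  rw [ea, eb] at step
  have chain : (∫ t in Ioc (0:ℝ) 1, ‖deriv f t‖ ^ p) ^ (1/p)
      ≤ 2 * (δ⁻¹ * A) + δ⁻¹ * ((δ^2/2) * B) := by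
    have := le_trans step (by linarith [ec] :
      δ⁻¹ * A + δ⁻¹ * A + (∫ t in Ioc (0:ℝ) 1, (δ⁻¹ * Φ t) ^ p) ^ (1/p)
        ≤ δ⁻¹ * A + δ⁻¹ * A + δ⁻¹ * ((δ^2/2) * B))
    linarith
  have hδδ : δ⁻¹ * ((δ^2/2) * B) = (δ/2) * B := by
    field_simp
  rw [hδδ] at chain
  set κ : ℝ := if p ≤ 2 then p / (p - 1) else p with hκdef
  have hκ : 2 ≤ κ := by
    rw [hκdef]
    split_ifs with h
    · rw [le_div_iff₀ (by linarith)]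
      linarith
    · push_neg at h
      linarith
  have hfin : 2 * (δ⁻¹ * A) + (δ/2) * B ≤ κ * (δ⁻¹ * A + δ * B) := by
    nlinarith [mul_nonneg hδinv hA0, mul_nonneg hδ.le hB0]
  calc (∫ t in Ioc (0:ℝ) 1, ‖deriv f t‖ ^ p) ^ (1/p)
      ≤ 2 * (δ⁻¹ * A) + (δ/2) * B := chain
    _ ≤ κ * (δ⁻¹ * A + δ * B) := hfin
end

section
/- Fix p > 2 and define the sequence (q_k) by q_1 = p and q_{k+1} = 2p q_k / (2p + 2q_k − p q_k) (as long as the denominator is positive). Then the sequence is strictly increasing and either the denominator becomes nonpositive at some finite stage or q_k → ∞ as k → ∞. Consequently χ_p(q_k) = p q_k/(p + q_k) converges to p. -/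
open Filter

/-!
In terms of reciprocals the iteration is the two-dimensional Sobolev recursion
`1/q_{k+1} = 1/q_k - (p - 2)/(2p)`, valid while `q_k > 0` and the denominator is positive.
So the reciprocals strictly decrease (hence `q_k` strictly increases) by a fixed positive
amount, and since they stay positive as long as every denominator is positive, some
denominator must become nonpositive after finitely many steps.
-/

theorem bootstrap_step {p x : ℝ} (hp : 0 < p) (hx : 0 < x) (hD : 0 < 2 * p + 2 * x - p * x) :
    0 < 2 * p * x / (2 * p + 2 * x - p * x) ∧
      (2 * p * x / (2 * p + 2 * x - p * x))⁻¹ = x⁻¹ - (p - 2) / (2 * p) := by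
  refine ⟨by positivity, ?_⟩
  field_simp
  ring

theorem exists_nonpos_of_le_sub {r : ℕ → ℝ} {δ : ℝ} (hδ : 0 < δ) (h : ∀ n, r (n + 1) ≤ r n - δ) :
    ∃ n, r n ≤ 0 := by
  have linear : ∀ n : ℕ, r n ≤ r 0 - n * δ := by
    intro n
    induction n with
    | zero => simp
    | succ n ih => push_cast; linarith [h n]
  obtain ⟨n, hn⟩ := exists_nat_gt (r 0 / δ)
  refine ⟨n, (linear n).trans ?_⟩
  linarith [(div_lt_iff₀ hδ).1 hn]

theorem bootstrap_pos {p : ℝ} {q : ℕ → ℝ} (hp : 0 < p) (h1 : q 1 = p)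
    (hrec : ∀ k, 1 ≤ k → 0 < 2 * p + 2 * q k - p * q k →
      q (k + 1) = 2 * p * q k / (2 * p + 2 * q k - p * q k))
    {k : ℕ} (hk : 1 ≤ k) (hD : ∀ j, 1 ≤ j → j < k → 0 < 2 * p + 2 * q j - p * q j) :
    0 < q k := by
  induction k, hk using Nat.le_induction with
  | base => rwa [h1]
  | succ k hk ih =>
    have hDk := hD k hk k.lt_succ_self
    rw [hrec k hk hDk]
    exact (bootstrap_step hp (ih fun j hj hjk => hD j hj (hjk.trans k.lt_succ_self)) hDk).1

/-- The bootstrap exponent iteration: with `q₁ = p > 2` and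
`q_{k+1} = 2p q_k / (2p + 2q_k - p q_k)` (as long as the denominator is positive),
the sequence is strictly increasing where defined, and either the denominator becomes
nonpositive at some finite stage or `q_k → ∞`; consequently, in the latter case,
`χ_p(q_k) = p q_k/(p + q_k) → p`. -/
theorem bootstrap_exponents (p : ℝ) (hp : 2 < p) (q : ℕ → ℝ)
    (h1 : q 1 = p)
    (hrec : ∀ k, 1 ≤ k → 0 < 2 * p + 2 * q k - p * q k →
      q (k + 1) = 2 * p * q k / (2 * p + 2 * q k - p * q k)) :
    (∀ k, 1 ≤ k → (∀ j, 1 ≤ j → j ≤ k → 0 < 2 * p + 2 * q j - p * q j) →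
        q k < q (k + 1)) ∧
    ((∃ k, 1 ≤ k ∧ 2 * p + 2 * q k - p * q k ≤ 0) ∨
      (Tendsto q atTop atTop ∧
        Tendsto (fun k => p * q k / (p + q k)) atTop (nhds p))) := by
  have hp0 : 0 < p := by linarith
  have hδ : 0 < (p - 2) / (2 * p) := div_pos (by linarith) (by linarith)
  have step : ∀ k, 1 ≤ k → 0 < q k → 0 < 2 * p + 2 * q k - p * q k →
      0 < q (k + 1) ∧ (q (k + 1))⁻¹ = (q k)⁻¹ - (p - 2) / (2 * p) :=
    fun k hk hq hD => hrec k hk hD ▸ bootstrap_step hp0 hq hD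
  have pos : ∀ {k}, 1 ≤ k → _ → 0 < q k := bootstrap_pos hp0 h1 hrec
  refine ⟨fun k hk hD => ?_, Or.inl ?_⟩
  · have hqk := pos hk fun j hj hjk => hD j hj hjk.le
    obtain ⟨hpos, hinv⟩ := step k hk hqk (hD k hk le_rfl)
    exact (inv_lt_inv₀ hpos hqk).1 (by rw [hinv]; linarith)
  · by_contra! hD
    have hq : ∀ n, 0 < q (n + 1) := fun n => pos (by omega) fun j hj _ => hD j hj
    obtain ⟨n, hn⟩ := exists_nonpos_of_le_sub (r := fun n => (q (n + 1))⁻¹) hδ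
      fun n => (step (n + 1) (by omega) (hq n) (hD _ (by omega))).2.le
    exact hn.not_gt (inv_pos.2 (hq n))
end

section
/- For 1 < p < 3/2, the integral ∫_{E_1} (t²/s²)^p dt ds over the unit heat ball E_1 = {(s,t) : −1 < s < 0, t² < 2s ln(−s)/1} equals (2^{p+3/2}/(2p+1)) · Γ(p+3/2)/(3/2 − p)^{p+3/2}, where Γ is the gamma function; in particular it is finite. -/
open MeasureTheory Set Real

def unitHeatBall : Set (ℝ × ℝ) :=
  {p : ℝ × ℝ | -1 < p.1 ∧ p.1 < 0 ∧ p.2 ^ 2 < 2 * p.1 * Real.log (-p.1)}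

/-!
For fixed `s ∈ (-1, 0)` the section of `E₁` is `|t| < √(2 s log (-s))`, and integrating
`(t²/s²)^p` over it gives `2^(p+3/2)/(2p+1) · (-s)^(1/2-p) (-log (-s))^(p+1/2)`.
The substitution `s = -e^(-u)` turns the remaining integral over `(-1, 0)` into the Gamma
integral `∫₀^∞ u^(p+1/2) e^(-(3/2-p) u) du = Γ(p+3/2)/(3/2-p)^(p+3/2)`. The integrand is
nonnegative, so Fubini–Tonelli yields integrability together with the value.
-/

theorem integrableOn_and_setIntegral_eq_integral_of_sections {α β : Type*}
    [MeasurableSpace α] [MeasurableSpace β] {μ : Measure α} {ν : Measure β} [SFinite μ]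
    [SFinite ν] {f : α × β → ℝ} {A : Set (α × β)} {F : α → ℝ} (hA : MeasurableSet A)
    (hf : AEStronglyMeasurable f (μ.prod ν)) (hf_nonneg : ∀ z ∈ A, 0 ≤ f z)
    (h_section_int : ∀ x, IntegrableOn (fun y => f (x, y)) {y | (x, y) ∈ A} ν)
    (h_section : ∀ x, ∫ y in {y | (x, y) ∈ A}, f (x, y) ∂ν = F x) (hF : Integrable F μ) :
    IntegrableOn f A (μ.prod ν) ∧ ∫ z in A, f z ∂(μ.prod ν) = ∫ x, F x ∂μ := by
  have h_slice : ∀ x, ∫ y, A.indicator f (x, y) ∂ν = F x := fun x => by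
    rw [← h_section x]
    exact integral_indicator (hA.preimage measurable_prodMk_left)
  have h_int : Integrable (A.indicator f) (μ.prod ν) := by
    refine (integrable_prod_iff (hf.indicator hA)).2 ⟨ae_of_all _ fun x => ?_, ?_⟩
    · exact (integrable_indicator_iff (hA.preimage measurable_prodMk_left)).2 (h_section_int x)
    · refine hF.congr (ae_of_all _ fun x => ?_)
      rw [← h_slice x]
      exact integral_congr_ae (ae_of_all _ fun y =>
        (Real.norm_of_nonneg (indicator_nonneg hf_nonneg _)).symm)
  refine ⟨(integrable_indicator_iff hA).1 h_int, ?_⟩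
  rw [← integral_indicator hA, integral_prod _ h_int]
  exact integral_congr_ae (ae_of_all _ h_slice)

theorem intervalIntegral_neg_self_eq_two_mul_of_even {f : ℝ → ℝ} (hf : Continuous f)
    (h_even : ∀ x, f (-x) = f x) (a : ℝ) :
    ∫ x in -a..a, f x = 2 * ∫ x in 0..a, f x := by
  have h_left : ∫ x in -a..0, f x = ∫ x in 0..a, f x := by
    simpa only [h_even, neg_zero] using
      (intervalIntegral.integral_comp_neg (a := 0) (b := a) f).symm
  rw [← intervalIntegral.integral_add_adjacent_intervals (b := 0) (hf.intervalIntegrable _ _)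
    (hf.intervalIntegrable _ _), h_left, two_mul]

theorem integral_Ioo_neg_self_sq_div_sq_rpow {p a : ℝ} (hp : 0 ≤ p) (ha : 0 ≤ a) (c : ℝ) :
    ∫ t in Ioo (-a) a, (t ^ 2 / c ^ 2) ^ p
      = 2 * a ^ (2 * p + 1) / ((2 * p + 1) * (c ^ 2) ^ p) := by
  have h_pow : ∀ t, 0 ≤ t → (t ^ 2 / c ^ 2) ^ p = t ^ (2 * p) / (c ^ 2) ^ p := fun t ht => by
    rw [div_rpow (sq_nonneg t) (sq_nonneg c), ← rpow_natCast, ← rpow_mul ht, Nat.cast_ofNat]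
  rw [← integral_Ioc_eq_integral_Ioo, ← intervalIntegral.integral_of_le (by linarith),
    intervalIntegral_neg_self_eq_two_mul_of_even (by fun_prop) (by simp),
    intervalIntegral.integral_congr (g := fun t => t ^ (2 * p) / (c ^ 2) ^ p)
      fun t ht => h_pow t (by rw [uIcc_of_le ha] at ht; exact ht.1),
    intervalIntegral.integral_div, integral_rpow (Or.inl (by linarith)),
    zero_rpow (by linarith), sub_zero, div_div, mul_div_assoc]

theorem integrableOn_and_integral_Ioo_neg_rpow_mul_neg_log_neg_rpow {b c : ℝ} (hb : -1 < b)
    (hc : -1 < c) :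
    IntegrableOn (fun s : ℝ => (-s) ^ b * (-log (-s)) ^ c) (Ioo (-1) 0) ∧
    ∫ s in Ioo (-1) 0, (-s) ^ b * (-log (-s)) ^ c = Gamma (c + 1) / (b + 1) ^ (c + 1) := by
  have hr : 0 < b + 1 := by linarith
  have h_image : (fun u : ℝ => -exp (-u)) '' Ioi 0 = Ioo (-1) 0 := by
    ext s
    constructor
    · rintro ⟨u, hu, rfl⟩
      exact ⟨neg_lt_neg (exp_lt_one_iff.2 (neg_lt_zero.2 hu)), neg_lt_zero.2 (exp_pos _)⟩
    · rintro ⟨hs1, hs0⟩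
      refine ⟨-log (-s), neg_pos.2 (log_neg (by linarith) (by linarith)), ?_⟩
      simp only [neg_neg, exp_log (neg_pos.2 hs0)]
  have h_deriv : ∀ u ∈ Ioi (0 : ℝ),
      HasDerivWithinAt (fun u : ℝ => -exp (-u)) (exp (-u)) (Ioi 0) u := fun u _ => by
    simpa using (hasDerivAt_neg u).exp.fun_neg.hasDerivWithinAt
  have h_inj : InjOn (fun u : ℝ => -exp (-u)) (Ioi 0) :=
    (neg_injective.comp (exp_injective.comp neg_injective)).injOn
  have h_jacobian :
      EqOn (fun u => |exp (-u)| • ((-(-exp (-u))) ^ b * (-log (-(-exp (-u)))) ^ c))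
      (fun u => u ^ c * exp (-((b + 1) * u))) (Ioi 0) := fun u _ => by
    simp only [neg_neg, abs_of_pos (exp_pos _), smul_eq_mul, log_exp, ← exp_mul]
    rw [← mul_assoc, ← exp_add, mul_comm]
    ring_nf
  rw [← h_image,
    integrableOn_image_iff_integrableOn_abs_deriv_smul measurableSet_Ioi h_deriv h_inj,
    integral_image_eq_integral_abs_deriv_smul measurableSet_Ioi h_deriv h_inj,
    setIntegral_congr_fun measurableSet_Ioi h_jacobian]
  have h_int : IntegrableOn (fun u : ℝ => u ^ c * exp (-((b + 1) * u))) (Ioi 0) := by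
    simpa only [rpow_one, neg_mul] using integrableOn_rpow_mul_exp_neg_mul_rpow hc one_pos hr
  refine ⟨h_int.congr_fun h_jacobian.symm measurableSet_Ioi, ?_⟩
  rw [← add_sub_cancel_right c 1, integral_rpow_mul_exp_neg_mul_Ioi (by linarith) hr,
    add_sub_cancel_right, one_div, inv_rpow hr.le, inv_mul_eq_div]

theorem mk_mem_unitHeatBall_iff {s t : ℝ} :
    (s, t) ∈ unitHeatBall ↔
      s ∈ Ioo (-1) 0 ∧ t ∈ Ioo (-√(2 * s * log (-s))) √(2 * s * log (-s)) := by
  simp only [unitHeatBall, mem_ofPred_eq, mem_Ioo, ← sq_lt, and_assoc]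

theorem measurableSet_unitHeatBall : MeasurableSet unitHeatBall := by
  unfold unitHeatBall
  measurability

theorem setIntegral_section_unitHeatBall {p s : ℝ} (hp : 0 ≤ p) (hs : s ∈ Ioo (-1) 0) :
    ∫ t in {t | (s, t) ∈ unitHeatBall}, (t ^ 2 / s ^ 2) ^ p
      = 2 ^ (p + 3 / 2) / (2 * p + 1) * ((-s) ^ (1 / 2 - p) * (-log (-s)) ^ (p + 1 / 2)) := by
  have h_section :
      {t | (s, t) ∈ unitHeatBall} = Ioo (-√(2 * s * log (-s))) √(2 * s * log (-s)) := by
    ext t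
    simp [mk_mem_unitHeatBall_iff, hs]
  obtain ⟨σ, hσ0, hσ1, rfl⟩ : ∃ σ, 0 < σ ∧ σ < 1 ∧ s = -σ :=
    ⟨-s, by linarith [hs.2], by linarith [hs.1], by ring⟩
  have hL : 0 < -log σ := neg_pos.2 (log_neg hσ0 hσ1)
  have h_radicand : 2 * -σ * log (-(-σ)) = 2 * (σ * -log σ) := by rw [neg_neg]; ring
  have h_two : (2 : ℝ) ^ (p + 3 / 2) = 2 * 2 ^ (p + 1 / 2) := by
    rw [show p + 3 / 2 = p + 1 / 2 + 1 by ring, rpow_add_one two_ne_zero, mul_comm]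
  have h_σ : σ ^ (1 / 2 - p) = σ ^ (p + 1 / 2) / σ ^ (2 * p) := by
    rw [← rpow_sub hσ0]
    ring_nf
  rw [h_section, integral_Ioo_neg_self_sq_div_sq_rpow hp (sqrt_nonneg _), h_radicand,
    sqrt_eq_rpow, ← rpow_mul (by positivity), show 1 / 2 * (2 * p + 1) = p + 1 / 2 by ring,
    mul_rpow zero_le_two (by positivity), mul_rpow hσ0.le hL.le, neg_sq, ← rpow_natCast,
    ← rpow_mul hσ0.le, neg_neg, h_two, h_σ]
  push_cast
  field_simp

/-- The `L^p` norm of the heat-ball weight `t²/s²`: for `1 < p < 3/2`,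
`∫_{E₁} (t²/s²)^p = (2^{p+3/2}/(2p+1)) Γ(p+3/2)/(3/2-p)^{p+3/2}`. -/
theorem heat_ball_weight_integral (p : ℝ) (hp1 : 1 < p) (hp2 : p < 3 / 2) :
    IntegrableOn (fun q : ℝ × ℝ => (q.2 ^ 2 / q.1 ^ 2) ^ p) unitHeatBall ∧
    ∫ q in unitHeatBall, (q.2 ^ 2 / q.1 ^ 2) ^ p
      = 2 ^ (p + 3 / 2) / (2 * p + 1)
        * (Real.Gamma (p + 3 / 2) / (3 / 2 - p) ^ (p + 3 / 2)) := by
  have hp : 0 ≤ p := by linarith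
  set C : ℝ := 2 ^ (p + 3 / 2) / (2 * p + 1)
  set G : ℝ → ℝ := fun s => (-s) ^ (1 / 2 - p) * (-log (-s)) ^ (p + 1 / 2)
  obtain ⟨hG_int, hG⟩ := integrableOn_and_integral_Ioo_neg_rpow_mul_neg_log_neg_rpow
    (b := 1 / 2 - p) (c := p + 1 / 2) (by linarith) (by linarith)
  have h_section : ∀ s, ∫ t in {t | (s, t) ∈ unitHeatBall}, (t ^ 2 / s ^ 2) ^ p
      = (Ioo (-1) 0).indicator (fun s => C * G s) s := fun s => by
    by_cases hs : s ∈ Ioo (-1) 0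
    · rw [indicator_of_mem hs, setIntegral_section_unitHeatBall hp hs]
    · have : {t | (s, t) ∈ unitHeatBall} = ∅ := by simp [mk_mem_unitHeatBall_iff, hs]
      rw [indicator_of_notMem hs, this, Measure.restrict_empty, integral_zero_measure]
  have h_section_int : ∀ s, IntegrableOn (fun t => (t ^ 2 / s ^ 2) ^ p)
      {t | (s, t) ∈ unitHeatBall} := fun s =>
    (Continuous.integrableOn_Icc (by fun_prop)).mono_set
      fun t ht => Ioo_subset_Icc_self (mk_mem_unitHeatBall_iff.1 ht).2
  rw [Measure.volume_eq_prod]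
  refine (integrableOn_and_setIntegral_eq_integral_of_sections measurableSet_unitHeatBall
    (by fun_prop : Measurable _).aestronglyMeasurable (fun q _ => by positivity) h_section_int
    h_section
    ((integrable_indicator_iff measurableSet_Ioo).2 (hG_int.const_mul C))).imp_right
    fun h => ?_
  rw [h, integral_indicator measurableSet_Ioo, integral_const_mul, hG,
    show p + 1 / 2 + 1 = p + 3 / 2 by ring, show 1 / 2 - p + 1 = 3 / 2 - p by ring]
end
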